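/- Monotonicity transfer: with the setup of the previous statement (d(x,u) = −ι_{X;U}(x;u) defined from the IB(C)-optimal channel P_{U|Y}), for every δ ∈ ℝ we have R(−C − δ) ≥ IB(C + δ), where R(D) = min_{P_{Ũ|Y}: E[d(X,Ũ)] ≤ D} I(Y;Ũ) and IB(t) = min_{P_{Ũ|Y}: I(X;Ũ) ≥ t} I(Y;Ũ). -/

import Mathlib

open Finset

noncomputable section

variable {X Y U : Type*}

/-- Joint law of `(X,U)` induced by the source joint `p` on `(X,Y)` and a channel
`r : Y → U` via the Markov chain `X → Y → U`. -/
def jnt [Fintype Y] (p : X → Y → ℝ) (r : Y → U → ℝ) (x : X) (u : U) : ℝ :=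
  ∑ y, p x y * r y u

/-- Marginal of `X`. -/
def mX [Fintype Y] (p : X → Y → ℝ) (x : X) : ℝ := ∑ y, p x y

/-- Marginal of `Y`. -/
def mY [Fintype X] (p : X → Y → ℝ) (y : Y) : ℝ := ∑ x, p x y

/-- Marginal of `U` under channel `r`. -/
def mU [Fintype X] [Fintype Y] (p : X → Y → ℝ) (r : Y → U → ℝ) (u : U) : ℝ :=
  ∑ x, jnt p r x u

/-- Information density `ι_{X;U}(x;u)` under channel `r` (log base 2). -/
def infoXU [Fintype X] [Fintype Y] (p : X → Y → ℝ) (r : Y → U → ℝ) (x : X) (u : U) : ℝ :=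
  Real.logb 2 (jnt p r x u / (mX p x * mU p r u))

/-- Mutual information `I(X;U)` under channel `r`. -/
def mutXU [Fintype X] [Fintype Y] [Fintype U] (p : X → Y → ℝ) (r : Y → U → ℝ) : ℝ :=
  ∑ x, ∑ u, jnt p r x u * infoXU p r x u

/-- Mutual information `I(Y;U)` under channel `r`. -/
def mutYU [Fintype X] [Fintype Y] [Fintype U] (p : X → Y → ℝ) (r : Y → U → ℝ) : ℝ :=
  ∑ y, ∑ u, mY p y * r y u * Real.logb 2 (r y u / mU p r u)

/-- Expected distortion `E[d(X,Ũ)]` with `d(x,u) = −ι_{X;U}(x;u)` (information density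
defined from the fixed channel `qs`), where `Ũ` is generated by channel `r`. -/
def expDist [Fintype X] [Fintype Y] [Fintype U] (p : X → Y → ℝ) (qs r : Y → U → ℝ) : ℝ :=
  ∑ x, ∑ u, jnt p r x u * (-(infoXU p qs x u))

/-- The set of channels from `Y` to `U`. -/
def Chan (Y U : Type*) [Fintype U] : Set (Y → U → ℝ) :=
  {r | (∀ y u, 0 ≤ r y u) ∧ ∀ y, ∑ u, r y u = 1}

/-- Finite Gibbs inequality. -/
lemma gibbs {ι : Type*} [Fintype ι] (a b : ι → ℝ)
    (ha : ∀ i, 0 ≤ a i) (hb : ∀ i, 0 ≤ b i)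
    (hab : ∀ i, b i = 0 → a i = 0)
    (hs : ∑ i, b i ≤ ∑ i, a i) :
    0 ≤ ∑ i, a i * Real.logb 2 (a i / b i) := by
  have key : ∀ i ∈ Finset.univ, a i * Real.log (b i / a i) ≤ b i - a i := by
    intro i _
    rcases eq_or_lt_of_le (ha i) with h0 | h0
    · simp [← h0]; exact hb i
    · rcases eq_or_lt_of_le (hb i) with hb0 | hb0
      · exact absurd (hab i hb0.symm) (by linarith)
      · have hlog := Real.log_le_sub_one_of_pos (div_pos hb0 h0)
        calc a i * Real.log (b i / a i) ≤ a i * (b i / a i - 1) :=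
              mul_le_mul_of_nonneg_left hlog h0.le
          _ = b i - a i := by field_simp
  have hsum : ∑ i, a i * Real.log (b i / a i) ≤ 0 := by
    calc ∑ i, a i * Real.log (b i / a i) ≤ ∑ i, (b i - a i) :=
          Finset.sum_le_sum key
      _ ≤ 0 := by rw [Finset.sum_sub_distrib]; linarith
  have hneg : ∀ i ∈ Finset.univ, a i * Real.logb 2 (a i / b i)
      = -(a i * Real.log (b i / a i)) / Real.log 2 := by
    intro i _
    rcases eq_or_lt_of_le (ha i) with h0 | h0
    · simp [← h0]
    · rcases eq_or_lt_of_le (hb i) with hb0 | hb0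
      · exact absurd (hab i hb0.symm) (by linarith)
      · rw [Real.logb, Real.log_div (ne_of_gt h0) (ne_of_gt hb0),
          Real.log_div (ne_of_gt hb0) (ne_of_gt h0)]
        ring
  rw [Finset.sum_congr rfl hneg, ← Finset.sum_div, Finset.sum_neg_distrib]
  exact div_nonneg (neg_nonneg.2 hsum) (Real.log_pos one_lt_two).le

section Aux

variable [Fintype X] [Fintype Y] [Fintype U]

lemma jnt_nonneg (p : X → Y → ℝ) (hp : ∀ x y, 0 < p x y) {r : Y → U → ℝ}
    (hr : r ∈ Chan Y U) (x : X) (u : U) : 0 ≤ jnt p r x u :=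
  Finset.sum_nonneg fun y _ => mul_nonneg (hp x y).le (hr.1 y u)

lemma mU_nonneg (p : X → Y → ℝ) (hp : ∀ x y, 0 < p x y) {r : Y → U → ℝ}
    (hr : r ∈ Chan Y U) (u : U) : 0 ≤ mU p r u :=
  Finset.sum_nonneg fun x _ => jnt_nonneg p hp hr x u

lemma jnt_le_mU (p : X → Y → ℝ) (hp : ∀ x y, 0 < p x y) {r : Y → U → ℝ}
    (hr : r ∈ Chan Y U) (x : X) (u : U) : jnt p r x u ≤ mU p r u :=
  Finset.single_le_sum (fun x' _ => jnt_nonneg p hp hr x' u) (Finset.mem_univ x)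

lemma jnt_sum_one (p : X → Y → ℝ) (hps : ∑ x, ∑ y, p x y = 1) {r : Y → U → ℝ}
    (hr : r ∈ Chan Y U) : ∑ x, ∑ u, jnt p r x u = 1 := by
  have h : ∀ x, ∑ u, jnt p r x u = ∑ y, p x y := by
    intro x
    simp only [jnt]
    rw [Finset.sum_comm]
    simp [← Finset.mul_sum, hr.2]
  rw [Finset.sum_congr rfl fun x _ => h x]
  exact hps

lemma mU_sum_one (p : X → Y → ℝ) (hps : ∑ x, ∑ y, p x y = 1) {r : Y → U → ℝ}
    (hr : r ∈ Chan Y U) : ∑ u, mU p r u = 1 := by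
  simp only [mU]
  rw [Finset.sum_comm]
  exact jnt_sum_one p hps hr

lemma mU_eq_zero_imp (p : X → Y → ℝ) (hp : ∀ x y, 0 < p x y) {r : Y → U → ℝ}
    (hr : r ∈ Chan Y U) (hX : Nonempty X) {u : U} (h : mU p r u = 0) (y : Y) :
    r y u = 0 := by
  obtain ⟨x0⟩ := hX
  have h1 : jnt p r x0 u = 0 :=
    (Finset.sum_eq_zero_iff_of_nonneg fun x _ => jnt_nonneg p hp hr x u).1 h x0
      (Finset.mem_univ x0)
  have h2 : p x0 y * r y u = 0 :=
    (Finset.sum_eq_zero_iff_of_nonneg fun y' _ =>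
      mul_nonneg (hp x0 y').le (hr.1 y' u)).1 h1 y (Finset.mem_univ y)
  rcases mul_eq_zero.1 h2 with h3 | h3
  · exact absurd h3 (hp x0 y).ne'
  · exact h3

/-- `I(Y;U) ≥ 0` for any channel. -/
lemma mutYU_nonneg (p : X → Y → ℝ) (hp : ∀ x y, 0 < p x y)
    (hps : ∑ x, ∑ y, p x y = 1) {r : Y → U → ℝ} (hr : r ∈ Chan Y U) :
    0 ≤ mutYU p r := by
  have hX : Nonempty X := by
    by_contra h
    rw [not_nonempty_iff] at h
    simp at hps
  have hmY : ∀ y, 0 < mY p y := fun y =>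
    Finset.sum_pos (fun x _ => hp x y) Finset.univ_nonempty
  have hmY1 : ∑ y, mY p y = 1 := by
    simp only [mY]; rw [Finset.sum_comm]; exact hps
  set a : Y × U → ℝ := fun i => mY p i.1 * r i.1 i.2 with ha_def
  set b : Y × U → ℝ := fun i => mY p i.1 * mU p r i.2 with hb_def
  have hg := gibbs a b
    (fun i => mul_nonneg (hmY i.1).le (hr.1 i.1 i.2))
    (fun i => mul_nonneg (hmY i.1).le (mU_nonneg p hp hr i.2))
    (by
      intro i hb0
      rcases mul_eq_zero.1 hb0 with h | h
      · exact absurd h (hmY i.1).ne'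
      · simp only [ha_def]
        rw [mU_eq_zero_imp p hp hr hX h i.1, mul_zero])
    (by
      have h1 : ∑ i : Y × U, a i = 1 := by
        rw [Fintype.sum_prod_type]
        simp only [ha_def, ← Finset.mul_sum]
        simp [hr.2, hmY1]
      have h2 : ∑ i : Y × U, b i = 1 := by
        rw [Fintype.sum_prod_type]
        simp only [hb_def, ← Finset.mul_sum]
        simp [mU_sum_one p hps hr, hmY1]
      rw [h1, h2])
  have heq : ∑ i : Y × U, a i * Real.logb 2 (a i / b i) = mutYU p r := by
    rw [Fintype.sum_prod_type]
    apply Finset.sum_congr rfl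
    intro y _
    apply Finset.sum_congr rfl
    intro u _
    simp only [ha_def, hb_def, mutYU]
    rw [mul_div_mul_left _ _ (hmY y).ne']
  rw [heq] at hg
  exact hg

/-- Expected-KL identity consequence: `E[ι_{X;U,qs}(X;Ũ)] ≤ I(X;Ũ)`. -/
lemma info_gain (p : X → Y → ℝ) (hp : ∀ x y, 0 < p x y)
    (hps : ∑ x, ∑ y, p x y = 1)
    (qs : Y → U → ℝ) (hqpos : ∀ y u, 0 < qs y u) (hqchan : qs ∈ Chan Y U)
    {r : Y → U → ℝ} (hr : r ∈ Chan Y U) :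
    -(expDist p qs r) ≤ mutXU p r := by
  have hX : Nonempty X := by
    by_contra h; rw [not_nonempty_iff] at h; simp at hps
  have hY : Nonempty Y := by
    by_contra h; rw [not_nonempty_iff] at h; simp at hps
  have hjq : ∀ x u, 0 < jnt p qs x u := fun x u =>
    Finset.sum_pos (fun y _ => mul_pos (hp x y) (hqpos y u)) Finset.univ_nonempty
  have hmuq : ∀ u, 0 < mU p qs u := fun u =>
    Finset.sum_pos (fun x _ => hjq x u) Finset.univ_nonempty
  have hmX : ∀ x, 0 < mX p x := fun x =>
    Finset.sum_pos (fun y _ => hp x y) Finset.univ_nonempty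
  set a : X × U → ℝ := fun i => jnt p r i.1 i.2 with ha_def
  set b : X × U → ℝ := fun i => jnt p qs i.1 i.2 * mU p r i.2 / mU p qs i.2
    with hb_def
  have hg := gibbs a b
    (fun i => jnt_nonneg p hp hr i.1 i.2)
    (fun i => div_nonneg (mul_nonneg (hjq i.1 i.2).le (mU_nonneg p hp hr i.2))
      (hmuq i.2).le)
    (by
      intro i hb0
      have h1 : jnt p qs i.1 i.2 * mU p r i.2 = 0 := by
        rcases div_eq_zero_iff.1 hb0 with h | h
        · exact h
        · exact absurd h (hmuq i.2).ne'
      have h2 : mU p r i.2 = 0 := by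
        rcases mul_eq_zero.1 h1 with h | h
        · exact absurd h (hjq i.1 i.2).ne'
        · exact h
      exact le_antisymm (h2 ▸ jnt_le_mU p hp hr i.1 i.2)
        (jnt_nonneg p hp hr i.1 i.2))
    (by
      have h1 : ∑ i : X × U, a i = 1 := by
        rw [Fintype.sum_prod_type]; exact jnt_sum_one p hps hr
      have h2 : ∑ i : X × U, b i = 1 := by
        rw [Fintype.sum_prod_type, Finset.sum_comm]
        have h3 : ∀ u, ∑ x, jnt p qs x u * mU p r u / mU p qs u = mU p r u := by
          intro u
          rw [← Finset.sum_div, ← Finset.sum_mul,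
            show (∑ x, jnt p qs x u) = mU p qs u from rfl,
            mul_comm, mul_div_assoc, div_self (hmuq u).ne', mul_one]
        simp only [hb_def]
        rw [Finset.sum_congr rfl fun u _ => h3 u]
        exact mU_sum_one p hps hr
      rw [h1, h2])
  have heq : ∑ i : X × U, a i * Real.logb 2 (a i / b i)
      = mutXU p r + expDist p qs r := by
    simp only [mutXU, expDist, ← Finset.sum_add_distrib]
    rw [Fintype.sum_prod_type]
    apply Finset.sum_congr rfl; intro x _
    apply Finset.sum_congr rfl; intro u _
    rcases eq_or_lt_of_le (jnt_nonneg p hp hr x u) with h0 | h0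
    · have hz : jnt p r x u = 0 := h0.symm
      simp only [ha_def, hz]
      simp
    · have hmur : 0 < mU p r u := lt_of_lt_of_le h0 (jnt_le_mU p hp hr x u)
      have e1 : infoXU p r x u - infoXU p qs x u
          = Real.logb 2 (jnt p r x u /
              (jnt p qs x u * mU p r u / mU p qs u)) := by
        simp only [infoXU]
        rw [← Real.logb_div (div_pos h0 (mul_pos (hmX x) hmur)).ne'
          (div_pos (hjq x u) (mul_pos (hmX x) (hmuq u))).ne']
        congr 1
        field_simp [h0.ne', hmur.ne', (hmX x).ne', (hmuq u).ne', (hjq x u).ne']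
      simp only [ha_def, hb_def]
      rw [← e1]
      ring
  rw [heq] at hg
  linarith

end Aux

/-- Monotonicity transfer. With `d(x,u) = −ι_{X;U}(x;u)` defined from the
IB(C)-optimal channel `qs`, for every `δ`, any channel feasible for `R(−C−δ)` satisfies
`I(X;Ũ) ≥ C+δ`, hence `R(−C−δ) ≥ IB(C+δ)` (minima expressed as `sInf`; the `R`-feasible
set is assumed nonempty so that its `sInf` is meaningful). -/
theorem stmt9 [Fintype X] [Fintype Y] [Fintype U]
    (p : X → Y → ℝ) (hp : ∀ x y, 0 < p x y) (hps : ∑ x, ∑ y, p x y = 1)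
    (qs : Y → U → ℝ) (hqpos : ∀ y u, 0 < qs y u) (hqchan : qs ∈ Chan Y U)
    (C δ : ℝ)
    (hfeas : mutXU p qs ≥ C)
    (hmin : ∀ r ∈ Chan Y U, mutXU p r ≥ C → mutYU p qs ≤ mutYU p r)
    (hne : {v : ℝ | ∃ r ∈ Chan Y U, expDist p qs r ≤ -C - δ ∧ mutYU p r = v}.Nonempty) :
    (∀ r ∈ Chan Y U, expDist p qs r ≤ -C - δ → mutXU p r ≥ C + δ)
    ∧ sInf {v : ℝ | ∃ r ∈ Chan Y U, mutXU p r ≥ C + δ ∧ mutYU p r = v}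
        ≤ sInf {v : ℝ | ∃ r ∈ Chan Y U, expDist p qs r ≤ -C - δ ∧ mutYU p r = v} := by
  have part1 : ∀ r ∈ Chan Y U, expDist p qs r ≤ -C - δ → mutXU p r ≥ C + δ := by
    intro r hr hd
    have := info_gain p hp hps qs hqpos hqchan hr
    linarith
  refine ⟨part1, ?_⟩
  apply csInf_le_csInf
  · exact ⟨0, fun v ⟨r, hr, _, hv⟩ => hv ▸ mutYU_nonneg p hp hps hr⟩
  · exact hne
  · rintro v ⟨r, hr, hd, hv⟩
    exact ⟨r, hr, part1 r hr hd, hv⟩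

end
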